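/- Let f : ℝⁿ → ℝ be L-smooth and X convex and closed. For the projected gradient step x_{k+1} = Proj_X(x_k - γ g) with γ = 1/L and arbitrary vector g, one has f(x_{k+1}) - f(x_k) ≤ (1/L)‖∇f(x_k) - g‖² - (L/4)‖x_{k+1} - x_k‖². -/

import Mathlib

open Set
open scoped InnerProductSpace

/-! The descent lemma bounds `f x_{k+1} - f x_k` by `⟪∇f(x_k), d⟫ + (L/2)‖d‖²` with
`d = x_{k+1} - x_k`. Splitting `∇f(x_k) = (∇f(x_k) - g) + g`, the variational inequality of the
projection gives `⟪g, d⟫ ≤ -L‖d‖²`, and Cauchy–Schwarz followed by Young's inequality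
`ab ≤ a²/L + (L/4)b²` bounds the remaining term. -/

section DescentLemma

variable {E : Type*} [NormedAddCommGroup E] [InnerProductSpace ℝ E] {f' : E → E} {L : ℝ}

theorem HasGradientAt.hasDerivAt_comp_add_smul [CompleteSpace E] {f : E → ℝ} {v x d : E}
    {t : ℝ} (hf : HasGradientAt f v (x + t • d)) :
    HasDerivAt (fun s : ℝ => f (x + s • d)) ⟪v, d⟫_ℝ t := by
  have hline : HasDerivAt (fun s : ℝ => x + s • d) d t := by
    simpa using ((hasDerivAt_id t).smul_const d).const_add x
  exact hf.hasFDerivAt.comp_hasDerivAt t hline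

theorem inner_gradient_add_smul_sub_le (hlip : ∀ x y, ‖f' x - f' y‖ ≤ L * ‖x - y‖)
    (x d : E) {t : ℝ} (ht : 0 ≤ t) :
    ⟪f' (x + t • d) - f' x, d⟫_ℝ ≤ L * t * ‖d‖ ^ 2 :=
  calc ⟪f' (x + t • d) - f' x, d⟫_ℝ
    _ ≤ ‖f' (x + t • d) - f' x‖ * ‖d‖ := real_inner_le_norm _ _
    _ ≤ L * ‖(x + t • d) - x‖ * ‖d‖ := by gcongr; exact hlip _ _
    _ = L * t * ‖d‖ ^ 2 := by
      rw [add_sub_cancel_left, norm_smul, Real.norm_of_nonneg ht]; ring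

theorem le_add_inner_gradient_add_sq_of_lipschitz [CompleteSpace E] {f : E → ℝ}
    (hf : ∀ x, HasGradientAt f (f' x) x) (hlip : ∀ x y, ‖f' x - f' y‖ ≤ L * ‖x - y‖) (x y : E) :
    f y ≤ f x + ⟪f' x, y - x⟫_ℝ + L / 2 * ‖y - x‖ ^ 2 := by
  set d := y - x
  -- `f` along the segment minus its quadratic model; the Lipschitz bound makes it antitone
  let φ : ℝ → ℝ := fun t => f (x + t • d) - t * ⟪f' x, d⟫_ℝ - L / 2 * t ^ 2 * ‖d‖ ^ 2
  have hφ (t : ℝ) :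
      HasDerivAt φ (⟪f' (x + t • d), d⟫_ℝ - ⟪f' x, d⟫_ℝ - L * t * ‖d‖ ^ 2) t := by
    have h := ((hf (x + t • d)).hasDerivAt_comp_add_smul.sub
      ((hasDerivAt_id t).mul_const ⟪f' x, d⟫_ℝ)).sub
      (((hasDerivAt_pow 2 t).const_mul (L / 2)).mul_const (‖d‖ ^ 2))
    exact h.congr_deriv (by push_cast; ring)
  have hanti : AntitoneOn φ (Icc 0 1) := by
    refine antitoneOn_of_hasDerivWithinAt_nonpos (convex_Icc 0 1)
      (fun t _ => (hφ t).continuousAt.continuousWithinAt)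
      (fun t _ => (hφ t).hasDerivWithinAt) fun t ht => ?_
    rw [interior_Icc] at ht
    have := inner_gradient_add_smul_sub_le hlip x d ht.1.le
    rw [inner_sub_left] at this
    linarith
  have h01 := hanti (left_mem_Icc.2 zero_le_one) (right_mem_Icc.2 zero_le_one) zero_le_one
  simp only [φ, zero_smul, add_zero, one_smul, add_sub_cancel, d] at h01
  linarith

end DescentLemma

section Projection

variable {F : Type*} [NormedAddCommGroup F] [InnerProductSpace ℝ F]

theorem Convex.inner_sub_nonpos_of_isMinOn_norm_sub {K : Set F} (hK : Convex ℝ K) {u v : F}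
    (hv : v ∈ K) (hmin : IsMinOn (fun w => ‖u - w‖) K v) {w : F} (hw : w ∈ K) :
    ⟪u - v, w - v⟫_ℝ ≤ 0 := by
  have : Nonempty K := ⟨⟨v, hv⟩⟩
  have hinf : ‖u - v‖ = ⨅ w : K, ‖u - w‖ :=
    le_antisymm (le_ciInf fun w => hmin w.2)
      (ciInf_le (f := fun w : K => ‖u - w‖) ⟨0, forall_mem_range.2 fun _ => norm_nonneg _⟩
        ⟨v, hv⟩)
  exact (norm_eq_iInf_iff_real_inner_le_zero hK hv).1 hinf w hw

theorem Convex.norm_sub_sq_add_inner_nonpos_of_isMinOn {K : Set F} (hK : Convex ℝ K)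
    {x p g : F} {γ : ℝ} (hx : x ∈ K) (hp : p ∈ K)
    (hmin : IsMinOn (fun w => ‖(x - γ • g) - w‖) K p) :
    ‖p - x‖ ^ 2 + γ * ⟪p - x, g⟫_ℝ ≤ 0 := by
  have h := hK.inner_sub_nonpos_of_isMinOn_norm_sub hp hmin hx
  have hu : (x - γ • g) - p = -(p - x) - γ • g := by abel
  have hw : x - p = -(p - x) := by abel
  rw [hu, hw, inner_sub_left, inner_neg_neg, inner_neg_right, real_inner_smul_left,
    real_inner_self_eq_norm_sq, real_inner_comm] at h
  linarith

end Projection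

theorem mul_le_one_div_mul_sq_add_div_four_mul_sq {L : ℝ} (hL : 0 < L) (a b : ℝ) :
    a * b ≤ 1 / L * a ^ 2 + L / 4 * b ^ 2 := by
  have h : 0 ≤ (a - L / 2 * b) ^ 2 / L := by positivity
  have : (a - L / 2 * b) ^ 2 / L = 1 / L * a ^ 2 + L / 4 * b ^ 2 - a * b := by
    field_simp; ring
  linarith

theorem projected_step_descent_general {n : ℕ} (X : Set (EuclideanSpace ℝ (Fin n)))
    (hXconv : Convex ℝ X)
    (f : EuclideanSpace ℝ (Fin n) → ℝ) (f' : EuclideanSpace ℝ (Fin n) → EuclideanSpace ℝ (Fin n))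
    (L : ℝ) (hL : 0 < L)
    (hdiff : ∀ x, HasGradientAt f (f' x) x)
    (hlip : ∀ x y, ‖f' x - f' y‖ ≤ L * ‖x - y‖)
    (g xk xk1 : EuclideanSpace ℝ (Fin n)) (hxk : xk ∈ X)
    -- `xk1` is the Euclidean projection of `xk - (1/L) g` onto `X`
    (hxk1 : xk1 ∈ X)
    (hproj : ∀ z ∈ X, ‖(xk - (1 / L) • g) - xk1‖ ≤ ‖(xk - (1 / L) • g) - z‖) :
    f xk1 - f xk ≤ 1 / L * ‖f' xk - g‖ ^ 2 - L / 4 * ‖xk1 - xk‖ ^ 2 := by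
  set d := xk1 - xk
  have hdesc := le_add_inner_gradient_add_sq_of_lipschitz hdiff hlip xk xk1
  have hstep := hXconv.norm_sub_sq_add_inner_nonpos_of_isMinOn hxk hxk1 hproj
  have hg : ⟪g, d⟫_ℝ ≤ -L * ‖d‖ ^ 2 := by
    have := mul_le_mul_of_nonneg_left hstep hL.le
    rw [real_inner_comm]
    field_simp at this
    linarith
  have hcs : ⟪f' xk - g, d⟫_ℝ ≤ ‖f' xk - g‖ * ‖d‖ := real_inner_le_norm _ _
  have hyoung := mul_le_one_div_mul_sq_add_div_four_mul_sq hL ‖f' xk - g‖ ‖d‖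
  rw [inner_sub_left] at hcs
  linarith

/-- **Descent inequality for a projected gradient step.** If `f` is `L`-smooth, `X` is convex
and closed, `x_k ∈ X`, and `x_{k+1} = Proj_X (x_k - (1/L) g)` for an arbitrary vector `g`, then
`f x_{k+1} - f x_k ≤ (1/L) ‖∇f(x_k) - g‖² - (L/4) ‖x_{k+1} - x_k‖²`. -/
theorem projected_step_descent {n : ℕ} (X : Set (EuclideanSpace ℝ (Fin n)))
    (hXconv : Convex ℝ X) (hXclosed : IsClosed X)
    (f : EuclideanSpace ℝ (Fin n) → ℝ) (f' : EuclideanSpace ℝ (Fin n) → EuclideanSpace ℝ (Fin n))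
    (L : ℝ) (hL : 0 < L)
    (hdiff : ∀ x, HasGradientAt f (f' x) x)
    (hlip : ∀ x y, ‖f' x - f' y‖ ≤ L * ‖x - y‖)
    (g xk xk1 : EuclideanSpace ℝ (Fin n)) (hxk : xk ∈ X)
    -- `xk1` is the Euclidean projection of `xk - (1/L) g` onto `X`
    (hxk1 : xk1 ∈ X)
    (hproj : ∀ z ∈ X, ‖(xk - (1 / L) • g) - xk1‖ ≤ ‖(xk - (1 / L) • g) - z‖) :
    f xk1 - f xk ≤ 1 / L * ‖f' xk - g‖ ^ 2 - L / 4 * ‖xk1 - xk‖ ^ 2 :=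
  projected_step_descent_general X hXconv f f' L hL hdiff hlip g xk xk1 hxk hxk1 hproj
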